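/- Let (Y_t) be an irreducible reversible Markov process on a graph containing an infinite set C∞, with invariant measure π and π(0) > 0. Suppose there is c > 0 such that liminf_{t→∞} P_0(|Y_{t/2}| ≤ √t) ≥ c and the number of points of C∞ in [−√t, √t]^d grows at most like K t^{d/2}. If Y_t ∈ C∞ for all t, then there is a constant C(ω) > 0 such that P_0(Y_t = 0) ≥ C(ω) t^{−d/2} for all large t; in particular liminf_{t→∞} log P_0(Y_t = 0)/log t ≥ −d/2. -/
import Mathlib


open Filter

/-- Let `Y` be an irreducible reversible Markov process on `ℤ^d` living on an
infinite set `Cinf`, with invariant measure `π`, `π(0) > 0` and `π(x) ≤ 2d`. Suppose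
`liminf_{t→∞} P_0(|Y_{t/2}| ≤ √t) ≥ c > 0` and `|Cinf ∩ [−√t,√t]^d| ≤ K t^{d/2}`. Then there
is `C(ω) > 0` with `P_0(Y_t = 0) ≥ C(ω) t^{−d/2}` for all large `t`; in particular
`liminf_{t→∞} log P_0(Y_t = 0)/log t ≥ −d/2`. Here `p t x y = P_x(Y_t = y)` is the
transition function. -/
theorem stmt12
    (d : ℕ) (hd : 1 ≤ d)
    (Cinf : Set (Fin d → ℤ)) (hCinf : Cinf.Infinite) (h0C : (0 : Fin d → ℤ) ∈ Cinf)
    (π : (Fin d → ℤ) → ℝ) (hπ0 : 0 < π 0) (hπb : ∀ x, π x ≤ 2 * d)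
    (p : ℝ → (Fin d → ℤ) → (Fin d → ℤ) → ℝ)
    (hnonneg : ∀ t x y, 0 ≤ p t x y)
    (hprob : ∀ t x, 0 ≤ t → ∑' y, p t x y = 1)
    (hchap : ∀ s t x y, 0 ≤ s → 0 ≤ t → p (s + t) x y = ∑' z, p s x z * p t z y)
    (hrev : ∀ t x y, 0 ≤ t → π x * p t x y = π y * p t y x)
    (hirr : ∀ t x y, 0 < t → x ∈ Cinf → y ∈ Cinf → 0 < p t x y)
    -- the process started at `0` stays in `Cinf`
    (hsupp : ∀ t y, 0 ≤ t → y ∉ Cinf → p t 0 y = 0)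
    (c : ℝ) (hc : 0 < c)
    -- invariance principle: `liminf_t P_0(|Y_{t/2}| ≤ √t) ≥ c`
    (hCLT : c ≤ liminf (fun t : ℝ =>
        ∑' x : {x : Fin d → ℤ | ∀ i, (|x i| : ℝ) ≤ Real.sqrt t}, p (t / 2) 0 ↑x) atTop)
    (K : ℝ) (hK : 0 < K)
    -- spatial ergodic theorem: `|Cinf ∩ [−√t,√t]^d| ≤ K t^{d/2}`
    (hgrowth : ∀ t : ℝ, 1 ≤ t →
      (Cinf ∩ {x : Fin d → ℤ | ∀ i, (|x i| : ℝ) ≤ Real.sqrt t}).Finite ∧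
      (Nat.card ↥(Cinf ∩ {x : Fin d → ℤ | ∀ i, (|x i| : ℝ) ≤ Real.sqrt t}) : ℝ)
        ≤ K * t ^ ((d : ℝ) / 2)) :
    (∃ C : ℝ, 0 < C ∧ ∀ᶠ t : ℝ in atTop, C * t ^ (-(d : ℝ) / 2) ≤ p t 0 0) ∧
    ((-((d : ℝ) / 2) : ℝ) : EReal)
      ≤ liminf (fun t : ℝ => ((Real.log (p t 0 0) / Real.log t : ℝ) : EReal)) atTop := by
  have hd0 : (0:ℝ) < d := by exact_mod_cast hd
  have hsummable : ∀ t x, 0 ≤ t → Summable (p t x) := by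
    intro t x ht
    by_contra hs
    have h1 := hprob t x ht
    rw [tsum_eq_zero_of_not_summable hs] at h1
    norm_num at h1
  have hle1 : ∀ t x y, 0 ≤ t → p t x y ≤ 1 := by
    intro t x y ht
    calc p t x y ≤ ∑' y, p t x y :=
          Summable.le_tsum (hsummable t x ht) y (fun z _ => hnonneg t x z)
      _ = 1 := hprob t x ht
  set C0 : ℝ := π 0 * c ^ 2 / (8 * d * K) with hC0def
  have hC0pos : 0 < C0 := by positivity
  -- the liminf hypothesis gives the eventual lower bound c/2
  have hev : ∀ᶠ t : ℝ in atTop, c / 2 <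
      ∑' x : {x : Fin d → ℤ | ∀ i, (|x i| : ℝ) ≤ Real.sqrt t}, p (t / 2) 0 ↑x := by
    refine eventually_lt_of_lt_liminf (lt_of_lt_of_le (by linarith) hCLT) ?_
    exact isBoundedUnder_of ⟨0, fun t => tsum_nonneg fun x => hnonneg _ _ _⟩
  -- main eventual bound
  have hmain : ∀ᶠ t : ℝ in atTop, C0 * t ^ (-(d : ℝ) / 2) ≤ p t 0 0 := by
    filter_upwards [hev, eventually_ge_atTop (1:ℝ)] with t hFt ht1
    have ht0 : (0:ℝ) < t := lt_of_lt_of_le one_pos ht1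
    have hs0 : (0:ℝ) ≤ t / 2 := by linarith
    obtain ⟨hfin, hcard⟩ := hgrowth t ht1
    set S := hfin.toFinset with hSdef
    set a : (Fin d → ℤ) → ℝ := p (t / 2) 0 with hadef
    have hSset : (S : Set (Fin d → ℤ)) =
        Cinf ∩ {x : Fin d → ℤ | ∀ i, (|x i| : ℝ) ≤ Real.sqrt t} := hfin.coe_toFinset
    -- the sum over the box equals the finite sum over S
    have hFS : ∑' x : {x : Fin d → ℤ | ∀ i, (|x i| : ℝ) ≤ Real.sqrt t}, a ↑x
        = ∑ z ∈ S, a z := by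
      rw [tsum_subtype, ← Finset.tsum_subtype' S a, tsum_subtype]
      congr 1
      funext z
      by_cases hzC : z ∈ Cinf
      · by_cases hzb : z ∈ {x : Fin d → ℤ | ∀ i, (|x i| : ℝ) ≤ Real.sqrt t}
        · rw [Set.indicator_of_mem hzb, Set.indicator_of_mem (by rw [hSset]; exact ⟨hzC, hzb⟩)]
        · rw [Set.indicator_of_notMem hzb,
            Set.indicator_of_notMem (by rw [hSset]; exact fun h => hzb h.2)]
      · have ha0 : a z = 0 := hsupp _ z hs0 hzC
        simp [Set.indicator_apply, ha0]
    rw [hFS] at hFt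
    -- cardinality bounds
    have hNcard : (S.card : ℝ) ≤ K * t ^ ((d : ℝ) / 2) := by
      rwa [Nat.card_coe_set_eq, Set.ncard_eq_toFinset_card _ hfin] at hcard
    have h0S : (0 : Fin d → ℤ) ∈ S := by
      rw [← Finset.mem_coe, hSset]
      exact ⟨h0C, fun i => by simp [Real.sqrt_nonneg]⟩
    have hScard : (0:ℝ) < S.card := by
      have : 0 < S.card := Finset.card_pos.2 ⟨0, h0S⟩
      exact_mod_cast this
    -- pointwise reversibility bound
    have hpt : ∀ z, π 0 / (2 * d) * a z ^ 2 ≤ a z * p (t / 2) z 0 := by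
      intro z
      rcases eq_or_lt_of_le (hnonneg (t / 2) 0 z) with h | h
      · rw [show a z = (0:ℝ) from h.symm]; simp
      · have hrv := hrev (t / 2) z 0 hs0
        have hb0 : 0 < π z * p (t / 2) z 0 := by
          rw [hrv]; exact mul_pos hπ0 h
        have hbz : 0 < p (t / 2) z 0 := by
          rcases eq_or_lt_of_le (hnonneg (t / 2) z 0) with h' | h'
          · rw [← h'] at hb0; simp at hb0
          · exact h'
        have hle : π 0 * a z ≤ 2 * d * p (t / 2) z 0 := by
          rw [← hrv]
          exact mul_le_mul_of_nonneg_right (hπb z) hbz.le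
        have h2d : (0:ℝ) < 2 * d := by positivity
        rw [div_mul_eq_mul_div, div_le_iff₀ h2d]
        nlinarith [mul_le_mul_of_nonneg_right hle h.le]
    -- Chapman-Kolmogorov + finite restriction
    have hchain : π 0 / (2 * d) * ∑ z ∈ S, a z ^ 2 ≤ p t 0 0 := by
      have hdec : p t 0 0 = ∑' z, a z * p (t / 2) z 0 := by
        have := hchap (t / 2) (t / 2) 0 0 hs0 hs0
        rwa [add_halves] at this
      have hsum : Summable (fun z => a z * p (t / 2) z 0) := by
        refine Summable.of_nonneg_of_le
          (fun z => mul_nonneg (hnonneg _ _ _) (hnonneg _ _ _))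
          (fun z => ?_) (hsummable (t / 2) 0 hs0)
        exact mul_le_of_le_one_right (hnonneg _ _ _) (hle1 _ _ _ hs0)
      calc π 0 / (2 * d) * ∑ z ∈ S, a z ^ 2
          = ∑ z ∈ S, π 0 / (2 * d) * a z ^ 2 := Finset.mul_sum _ _ _
        _ ≤ ∑ z ∈ S, a z * p (t / 2) z 0 := Finset.sum_le_sum fun z _ => hpt z
        _ ≤ ∑' z, a z * p (t / 2) z 0 :=
            Summable.sum_le_tsum S (fun z _ => mul_nonneg (hnonneg _ _ _) (hnonneg _ _ _)) hsum
        _ = p t 0 0 := hdec.symm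
    -- Cauchy–Schwarz
    have hCS : (c / 2) ^ 2 / (S.card : ℝ) ≤ ∑ z ∈ S, a z ^ 2 := by
      rw [div_le_iff₀ hScard]
      calc (c / 2) ^ 2 ≤ (∑ z ∈ S, a z) ^ 2 := by
            have := hFt.le
            nlinarith [hc]
        _ ≤ S.card * ∑ z ∈ S, a z ^ 2 := sq_sum_le_card_mul_sum_sq
        _ = (∑ z ∈ S, a z ^ 2) * S.card := by ring
    -- combine
    have htpow : (0:ℝ) < t ^ ((d : ℝ) / 2) := Real.rpow_pos_of_pos ht0 _
    have hneg : t ^ (-(d : ℝ) / 2) = (t ^ ((d : ℝ) / 2))⁻¹ := by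
      rw [neg_div, Real.rpow_neg ht0.le]
    have heq : C0 * t ^ (-(d : ℝ) / 2) = π 0 / (2 * d) * ((c / 2) ^ 2 / (K * t ^ ((d : ℝ) / 2))) := by
      rw [hneg, hC0def]
      field_simp
      ring
    calc C0 * t ^ (-(d : ℝ) / 2)
        = π 0 / (2 * d) * ((c / 2) ^ 2 / (K * t ^ ((d : ℝ) / 2))) := heq
      _ ≤ π 0 / (2 * d) * ((c / 2) ^ 2 / (S.card : ℝ)) := by
          apply mul_le_mul_of_nonneg_left _ (by positivity)
          exact div_le_div_of_nonneg_left (by positivity) hScard hNcard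
      _ ≤ π 0 / (2 * d) * ∑ z ∈ S, a z ^ 2 :=
          mul_le_mul_of_nonneg_left hCS (by positivity)
      _ ≤ p t 0 0 := hchain
  refine ⟨⟨C0, hC0pos, hmain⟩, ?_⟩
  -- second conclusion
  have hg : Tendsto (fun t : ℝ => Real.log C0 / Real.log t - (d : ℝ) / 2) atTop
      (nhds (-((d : ℝ) / 2))) := by
    have h1 : Tendsto (fun t : ℝ => Real.log C0 / Real.log t) atTop (nhds 0) := by
      simpa [div_eq_mul_inv] using
        (tendsto_const_nhds.mul (Real.tendsto_log_atTop.inv_tendsto_atTop) :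
          Tendsto (fun t : ℝ => Real.log C0 * (Real.log t)⁻¹) atTop (nhds (Real.log C0 * 0)))
    have := h1.sub_const ((d : ℝ) / 2)
    simpa using this
  have hgE : Tendsto (fun t : ℝ => ((Real.log C0 / Real.log t - (d : ℝ) / 2 : ℝ) : EReal)) atTop
      (nhds ((-((d : ℝ) / 2) : ℝ) : EReal)) :=
    (continuous_coe_real_ereal.tendsto _).comp hg
  have hliminfg : liminf (fun t : ℝ =>
      ((Real.log C0 / Real.log t - (d : ℝ) / 2 : ℝ) : EReal)) atTop
      = ((-((d : ℝ) / 2) : ℝ) : EReal) := hgE.liminf_eq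
  rw [← hliminfg]
  have hev2 : ∀ᶠ t : ℝ in atTop,
      ((Real.log C0 / Real.log t - (d : ℝ) / 2 : ℝ) : EReal)
        ≤ ((Real.log (p t 0 0) / Real.log t : ℝ) : EReal) := by
    filter_upwards [hmain, eventually_ge_atTop (2:ℝ)] with t hpt ht2
    have ht1 : (1:ℝ) < t := by linarith
    have ht0 : (0:ℝ) < t := by linarith
    have hlogt : 0 < Real.log t := Real.log_pos ht1
    have hppos : 0 < p t 0 0 := lt_of_lt_of_le (by positivity) hpt
    have hlogp : Real.log C0 + (-(d : ℝ) / 2) * Real.log t ≤ Real.log (p t 0 0) := by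
      have := Real.log_le_log (by positivity) hpt
      rwa [Real.log_mul hC0pos.ne' (by positivity), Real.log_rpow ht0] at this
    have hfin : Real.log C0 / Real.log t - (d : ℝ) / 2 ≤ Real.log (p t 0 0) / Real.log t := by
      have heq2 : (Real.log C0 + (-(d : ℝ) / 2) * Real.log t) / Real.log t
          = Real.log C0 / Real.log t - (d : ℝ) / 2 := by
        field_simp
        ring
      calc Real.log C0 / Real.log t - (d : ℝ) / 2
          = (Real.log C0 + (-(d : ℝ) / 2) * Real.log t) / Real.log t := heq2.symm
        _ ≤ Real.log (p t 0 0) / Real.log t := by gcongr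
    exact_mod_cast EReal.coe_le_coe_iff.2 hfin
  exact liminf_le_liminf hev2
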